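/- In the two-agent manipulation setting, let S* be the greedy set (obtained by enumerating O as o₁ ≻₁ ⋯ ≻₁ o_m and adding o_j to the current set S whenever S ∪ {o_j} is achievable by agent 1). For every additive utility u₁ consistent with ≻₁ and every best response ≻₁' of agent 1 with respect to u₁, agent 1's allocation under (≻₁', ≻₂) equals S*. In particular, for two agents, all best responses yield the same allocation for the manipulator, and this allocation does not depend on which consistent utility is chosen. -/

import Mathlib

/-!
For two agents the achievable sets are the independent sets of a matroid. A set `S` is
achievable iff for every `t` at most `t` items of `S` are among the items agent 2 would take
before agent 1's `t`-th turn, and this counting condition has the augmentation property.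
If a best response gave an allocation `A` other than the greedy set, let `x` be the first item,
in agent 1's order, on which they differ. It lies in the greedy set, since otherwise the greedy
algorithm would have taken it. Extending `x` and the items of `A` before it to a basis exchanges
`x` for a later item `y` of `A`, and since `u x > u y` the resulting achievable set beats `A`.
-/

/-- Sequential allocation: process the picking sequence in order; at each step the
agent whose turn it is receives his most-preferred (earliest in his ranking list)
item among those not yet allocated. Returns each agent's allocation. -/
def seqAlloc {A I : Type*} [DecidableEq A] [DecidableEq I]
    (prefs : A → List I) : List A → Finset I → A → Finset I
  | [], _ => fun _ => ∅
  | a :: rest, rem =>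
    match (prefs a).find? (fun o => decide (o ∈ rem)) with
    | none => seqAlloc prefs rest rem
    | some o => fun j =>
        if j = a then insert o (seqAlloc prefs rest (rem.erase o) j)
        else seqAlloc prefs rest (rem.erase o) j

/-- A report (strict linear order) over the item set `O`, given as a ranking list:
most preferred item first. -/
def IsReport {I : Type*} [DecidableEq I] (O : Finset I) (p : List I) : Prop :=
  p.Nodup ∧ ∀ o, o ∈ p ↔ o ∈ O

/-- Two-agent sequential allocation: agent `0` ("agent 1") reports `p1`,
agent `1` ("agent 2") reports `p2`. -/
def alloc2 {I : Type*} [DecidableEq I] (p1 p2 : List I)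
    (π : List (Fin 2)) (O : Finset I) : Fin 2 → Finset I :=
  seqAlloc (fun a => if a = 0 then p1 else p2) π O

/-- `S` is achievable by agent 1: some report gives agent 1 an allocation including `S`. -/
def Achievable {I : Type*} [DecidableEq I] (p2 : List I) (π : List (Fin 2))
    (O : Finset I) (S : Finset I) : Prop :=
  ∃ p1, IsReport O p1 ∧ S ⊆ alloc2 p1 p2 π O 0

/-- `o` is strictly preferred to `o'` in the ranking list `p`. -/
def Prefers {I : Type*} [DecidableEq I] (p : List I) (o o' : I) : Prop :=
  p.idxOf o < p.idxOf o'

instance {I : Type*} [DecidableEq I] (p : List I) (o o' : I) : Decidable (Prefers p o o') :=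
  inferInstanceAs (Decidable (_ < _))

/-- `u` is an additive utility consistent with the ranking `p` on item set `O`. -/
def Consistent {I : Type*} [DecidableEq I] (O : Finset I) (p : List I) (u : I → ℝ) : Prop :=
  (∀ o ∈ O, 0 < u o) ∧ ∀ o ∈ O, ∀ o' ∈ O, u o' < u o ↔ Prefers p o o'

open Classical in
/-- Greedy construction of a set: go through the ranking list in order and add an
item whenever the resulting set stays in the given (achievability) predicate. -/
noncomputable def greedy {I : Type*} [DecidableEq I]
    (ach : Finset I → Prop) : List I → Finset I → Finset I
  | [], S => S
  | o :: rest, S =>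
    if ach (insert o S) then greedy ach rest (insert o S) else greedy ach rest S


section

variable {I : Type*} [DecidableEq I]

section Greedy

variable (P : Finset I → Prop)

open Classical in
theorem greedy_cons (o : I) (l : List I) (S : Finset I) :
    greedy P (o :: l) S = if P (insert o S) then greedy P l (insert o S) else greedy P l S :=
  rfl

theorem greedy_append (l₁ l₂ : List I) (S : Finset I) :
    greedy P (l₁ ++ l₂) S = greedy P l₂ (greedy P l₁ S) := by
  induction l₁ generalizing S with
  | nil => rfl
  | cons o l₁ ih => rw [List.cons_append, greedy_cons, greedy_cons]; split_ifs <;> apply ih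

theorem subset_greedy (l : List I) (S : Finset I) : S ⊆ greedy P l S := by
  induction l generalizing S with
  | nil => exact subset_rfl
  | cons o l ih =>
    rw [greedy_cons]
    split_ifs
    exacts [(Finset.subset_insert o S).trans (ih _), ih S]

theorem greedy_subset (l : List I) (S : Finset I) : greedy P l S ⊆ S ∪ l.toFinset := by
  induction l generalizing S with
  | nil => simp [greedy]
  | cons o l ih =>
    rw [greedy_cons]
    split_ifs
    all_goals
      refine (ih _).trans fun y => ?_
      simp only [Finset.mem_union, Finset.mem_insert, List.toFinset_cons]
      tauto

theorem pred_greedy {l : List I} {S : Finset I} (hS : P S) : P (greedy P l S) := by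
  induction l generalizing S with
  | nil => exact hS
  | cons o l ih =>
    rw [greedy_cons]
    split_ifs with h
    exacts [ih h, ih hS]

variable {P}

theorem not_pred_insert_of_notMem_greedy (hdc : ∀ ⦃S T : Finset I⦄, T ⊆ S → P S → P T)
    {l : List I} (hl : l.Nodup) {z : I} (hz : z ∈ l) (hzG : z ∉ greedy P l ∅) :
    ¬ P (insert z ((greedy P l ∅).filter (Prefers l · z))) := by
  obtain ⟨l₁, l₂, rfl⟩ := List.append_of_mem hz
  have hzl₁ : z ∉ l₁ := fun h => (List.nodup_append.1 hl).2.2 z h z (by simp) rfl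
  set G₁ := greedy P l₁ ∅
  rw [greedy_append, greedy_cons] at hzG ⊢
  split_ifs at hzG ⊢ with h
  · exact absurd (subset_greedy P l₂ _ (Finset.mem_insert_self z G₁)) hzG
  · refine fun hP => h (hdc (Finset.insert_subset_insert z fun g hg => ?_) hP)
    have hgl₁ : g ∈ l₁ := by simpa using greedy_subset P l₁ ∅ hg
    refine Finset.mem_filter.2 ⟨subset_greedy P l₂ G₁ hg, ?_⟩
    rw [Prefers, List.idxOf_append_of_mem hgl₁, List.idxOf_append_of_notMem hzl₁,
      List.idxOf_cons_self, add_zero]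
    exact List.idxOf_lt_length_of_mem hgl₁

theorem exists_mem_greedy_notMem (hdc : ∀ ⦃S T : Finset I⦄, T ⊆ S → P S → P T) (h₀ : P ∅)
    {l : List I} (hl : l.Nodup) {A : Finset I} (hA : P A) (hAl : A ⊆ l.toFinset)
    (hne : A ≠ greedy P l ∅) :
    ∃ x ∈ greedy P l ∅, x ∉ A ∧ P (insert x (A.filter (Prefers l · x))) := by
  set G := greedy P l ∅
  obtain ⟨x, hxD, hmin⟩ := Finset.exists_min_image (symmDiff A G) (l.idxOf ·)
    (Finset.symmDiff_nonempty.2 hne)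
  have agree : ∀ g, Prefers l g x → (g ∈ A ↔ g ∈ G) := fun g hg => by
    by_contra h
    exact absurd (hmin g (Finset.mem_symmDiff.2 (by tauto))) (not_le.2 hg)
  rcases Finset.mem_symmDiff.1 hxD with ⟨hxA, hxG⟩ | ⟨hxG, hxA⟩
  · refine absurd (hdc ?_ hA) (not_pred_insert_of_notMem_greedy hdc hl
      (List.mem_toFinset.1 (hAl hxA)) hxG)
    refine Finset.insert_subset hxA fun g hg => ?_
    obtain ⟨hgG, hgx⟩ := Finset.mem_filter.1 hg
    exact (agree g hgx).2 hgG
  · refine ⟨x, hxG, hxA, hdc ?_ (pred_greedy P (l := l) h₀)⟩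
    refine Finset.insert_subset hxG fun g hg => ?_
    obtain ⟨hgA, hgx⟩ := Finset.mem_filter.1 hg
    exact (agree g hgx).1 hgA

end Greedy

section Exchange

variable {P : Finset I → Prop}
  (haug : ∀ ⦃S T : Finset I⦄, P S → P T → S.card < T.card → ∃ x ∈ T, x ∉ S ∧ P (insert x S))
include haug

theorem exists_superset_card_eq {S T : Finset I} (hS : P S) (hT : P T) (hST : S.card ≤ T.card) :
    ∃ B, S ⊆ B ∧ B ⊆ S ∪ T ∧ B.card = T.card ∧ P B := by
  obtain ⟨k, hk⟩ := Nat.exists_eq_add_of_le hST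
  induction k generalizing S with
  | zero => exact ⟨S, subset_rfl, Finset.subset_union_left, hk.symm, hS⟩
  | succ k ih =>
    obtain ⟨x, hxT, hxS, hx⟩ := haug hS hT (by omega)
    have hcard : (insert x S).card ≤ T.card := by rw [Finset.card_insert_of_notMem hxS]; omega
    obtain ⟨B, hSB, hBST, hBcard, hB⟩ :=
      ih hx hcard (by rw [Finset.card_insert_of_notMem hxS]; omega)
    refine ⟨B, (Finset.subset_insert x S).trans hSB, hBST.trans ?_, hBcard, hB⟩
    rw [Finset.insert_union]
    exact Finset.insert_subset (Finset.mem_union_right S hxT) subset_rfl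

theorem exists_insert_erase {A C : Finset I} {x : I} (hA : P A) (hmax : ∀ T, P T → T.card ≤ A.card)
    (hxA : x ∉ A) (hCA : C ⊆ A) (hxC : P (insert x C)) :
    ∃ y ∈ A, y ∉ C ∧ P (insert x (A.erase y)) := by
  obtain ⟨B, hxCB, hBA, hBcard, hB⟩ := exists_superset_card_eq haug hxC hA (hmax _ hxC)
  have hxB : x ∈ B := hxCB (Finset.mem_insert_self x C)
  have hBxA : B.erase x ⊆ A := fun b hb => by
    obtain ⟨hbx, hbB⟩ := Finset.mem_erase.1 hb
    rcases Finset.mem_union.1 (hBA hbB) with h | h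
    · exact hCA ((Finset.mem_insert.1 h).resolve_left hbx)
    · exact h
  have hcard : (B.erase x).card < A.card := by
    have := Finset.card_pos.2 ⟨x, hxB⟩
    rw [Finset.card_erase_of_mem hxB]
    omega
  obtain ⟨y, hyA, hyB⟩ := Finset.exists_mem_notMem_of_card_lt_card hcard
  have hyx : y ≠ x := fun h => hxA (h ▸ hyA)
  refine ⟨y, hyA, fun hyC => hyB ?_, ?_⟩
  · exact Finset.mem_erase.2 ⟨hyx, hxCB (Finset.mem_insert_of_mem hyC)⟩
  · have hsub : B.erase x ⊆ A.erase y := fun b hb =>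
      Finset.mem_erase.2 ⟨fun h => hyB (h ▸ hb), hBxA hb⟩
    have hcard' : (A.erase y).card ≤ (B.erase x).card := by
      rw [Finset.card_erase_of_mem hyA, Finset.card_erase_of_mem hxB, hBcard]
    rwa [← Finset.eq_of_subset_of_card_le hsub hcard', Finset.insert_erase hxB]

end Exchange

section Ranking

theorem prefers_or_prefers {p : List I} {x y : I} (hx : x ∈ p) (hxy : x ≠ y) :
    Prefers p x y ∨ Prefers p y x :=
  lt_or_gt_of_ne fun h => hxy ((List.idxOf_inj hx).1 h)

theorem prefers_of_find?_eq_some {l : List I} {f : I → Bool} {m y : I} (h : l.find? f = some m)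
    (hy : y ∈ l) (hfy : f y) (hym : y ≠ m) : Prefers l m y := by
  obtain ⟨hfm, as, bs, rfl, has⟩ := List.find?_eq_some_iff_append.1 h
  have hm : m ∉ as := fun hm => by simpa [hfm] using has m hm
  have hyas : y ∉ as := fun hy => by simpa [hfy] using has y hy
  rw [Prefers, List.idxOf_append_of_notMem hm, List.idxOf_append_of_notMem hyas,
    List.idxOf_cons_self, List.idxOf_cons_ne _ (Ne.symm hym)]
  omega

theorem exists_find?_eq_some {l : List I} {R : Finset I} (hR : R ⊆ l.toFinset) (hne : R.Nonempty) :
    ∃ o, l.find? (· ∈ R) = some o :=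
  Option.isSome_iff_exists.1 <| List.find?_isSome.2 <|
    hne.elim fun x hx => ⟨x, List.mem_toFinset.1 (hR hx), by simpa using hx⟩

theorem prefers_of_find?_mem_eq_some {l : List I} {R : Finset I} {m : I} (hR : R ⊆ l.toFinset)
    (h : l.find? (· ∈ R) = some m) : ∀ y ∈ R, y ≠ m → Prefers l m y := fun y hy =>
  prefers_of_find?_eq_some h (List.mem_toFinset.1 (hR hy)) (by simpa using hy)

def rankAmong (p : List I) (R : Finset I) (o : I) : ℕ :=
  (R.filter (Prefers p · o)).card

variable {p : List I} {R : Finset I}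

theorem rankAmong_erase_add_one {x o : I} (hx : x ∈ R) (h : Prefers p x o) :
    rankAmong p (R.erase x) o + 1 = rankAmong p R o := by
  rw [rankAmong, rankAmong, Finset.filter_erase,
    Finset.card_erase_add_one (Finset.mem_filter.2 ⟨hx, h⟩)]

theorem rankAmong_erase_le (x o : I) : rankAmong p (R.erase x) o ≤ rankAmong p R o :=
  Finset.card_le_card (Finset.filter_subset_filter _ (Finset.erase_subset x R))

theorem rankAmong_le_of_not_prefers {o o' : I} (h : ¬ Prefers p o' o) :
    rankAmong p R o ≤ rankAmong p R o' :=
  Finset.card_le_card <| Finset.monotone_filter_right R fun _ _ hy =>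
    lt_of_lt_of_le hy (not_lt.1 h)

theorem rankAmong_lt_of_prefers {o o' : I} (ho : o ∈ R) (h : Prefers p o o') :
    rankAmong p R o < rankAmong p R o' := by
  refine Finset.card_lt_card ⟨Finset.monotone_filter_right R fun _ _ hy => hy.trans h, ?_⟩
  intro hsub
  exact lt_irrefl _ (Finset.mem_filter.1 (hsub (Finset.mem_filter.2 ⟨ho, h⟩))).2

theorem rankAmong_eq_zero {m : I} (htop : ∀ y ∈ R, y ≠ m → Prefers p m y) :
    rankAmong p R m = 0 := by
  refine Finset.card_eq_zero.2 (Finset.filter_eq_empty_iff.2 fun y hy hym => ?_)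
  exact lt_asymm hym (htop y hy (ne_of_apply_ne (p.idxOf ·) hym.ne))

end Ranking

theorem card_filter_lt_card_filter {S T : Finset I} {f : I → Prop} [DecidablePred f]
    (hST : S.card < T.card) (hf : ∀ y ∈ T \ S, f y) : (S.filter f).card < (T.filter f).card := by
  have hS := Finset.card_inter_add_card_sdiff (S.filter f) T
  have hT := Finset.card_inter_add_card_sdiff (T.filter f) S
  have hcomm : S.filter f ∩ T = T.filter f ∩ S := by
    rw [Finset.filter_inter, Finset.filter_inter, Finset.inter_comm]
  have hSdiff : (S.filter f \ T).card ≤ (S \ T).card :=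
    Finset.card_le_card (Finset.sdiff_subset_sdiff (Finset.filter_subset f S) subset_rfl)
  have hTdiff : T.filter f \ S = T \ S :=
    subset_antisymm (Finset.sdiff_subset_sdiff (Finset.filter_subset f T) subset_rfl)
      fun y hy => Finset.mem_sdiff.2 ⟨Finset.mem_filter.2 ⟨(Finset.mem_sdiff.1 hy).1, hf y hy⟩,
        (Finset.mem_sdiff.1 hy).2⟩
  have := Finset.card_sdiff_lt_card_sdiff_iff.2 hST
  rw [hcomm] at hS
  rw [hTdiff] at hT
  omega

section Feasible

/-- The position in `π` of agent `0`'s `t`-th turn (counting from `0`), continued past the end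
of `π` so as to stay strictly increasing in `t`. -/
def turnIndex : List (Fin 2) → ℕ → ℕ
  | [], t => t
  | 0 :: _, 0 => 0
  | 0 :: π, t + 1 => turnIndex π t + 1
  | 1 :: π, t => turnIndex π t + 1

@[simp] theorem turnIndex_cons_zero_zero (π : List (Fin 2)) : turnIndex (0 :: π) 0 = 0 := rfl

@[simp] theorem turnIndex_cons_zero_succ (π : List (Fin 2)) (t : ℕ) :
    turnIndex (0 :: π) (t + 1) = turnIndex π t + 1 := rfl

@[simp] theorem turnIndex_cons_one (π : List (Fin 2)) (t : ℕ) :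
    turnIndex (1 :: π) t = turnIndex π t + 1 := by
  cases t <;> rfl

theorem turnIndex_lt_succ : ∀ (π : List (Fin 2)) (t : ℕ), turnIndex π t < turnIndex π (t + 1)
  | [], t => t.lt_succ_self
  | 0 :: _, 0 => Nat.succ_pos _
  | 0 :: π, t + 1 => by simpa using turnIndex_lt_succ π t
  | 1 :: π, t => by simpa using turnIndex_lt_succ π t

/-- Agent `0` can collect `S` out of the remaining items `R` under `π`: before his `t`-th turn
agent `1` has had `turnIndex π t - t` turns, so at most `t` items of `S` may lie among agent `1`'s
top `turnIndex π t` remaining items. -/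
def Feasible (p₂ : List I) (π : List (Fin 2)) (R S : Finset I) : Prop :=
  S ⊆ R ∧ S.card ≤ π.count 0 ∧
    ∀ t, (S.filter (rankAmong p₂ R · < turnIndex π t)).card ≤ t

variable {p₂ : List I} {π : List (Fin 2)} {R S : Finset I}

theorem feasible_empty : Feasible p₂ π R ∅ :=
  ⟨Finset.empty_subset R, Nat.zero_le _, fun _ => by simp⟩

theorem Feasible.mono {T : Finset I} (h : Feasible p₂ π R S) (hTS : T ⊆ S) : Feasible p₂ π R T :=
  ⟨hTS.trans h.1, (Finset.card_le_card hTS).trans h.2.1, fun t =>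
    (Finset.card_le_card (Finset.filter_subset_filter _ hTS)).trans (h.2.2 t)⟩

theorem Feasible.eq_empty_of_nil (h : Feasible p₂ [] R S) : S = ∅ :=
  Finset.card_eq_zero.1 (Nat.le_zero.1 h.2.1)

theorem Feasible.cons_zero (h : Feasible p₂ π R S) : Feasible p₂ (0 :: π) R S := by
  refine ⟨h.1, h.2.1.trans (by simp), fun t => ?_⟩
  cases t with
  | zero => simp
  | succ t =>
    refine (Finset.card_le_card (Finset.monotone_filter_right S fun o _ ho => ?_)).trans (h.2.2 _)
    exact lt_of_lt_of_le ho (turnIndex_lt_succ π t)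

theorem Feasible.insert_cons_zero {x : I} (hx : x ∈ R) (hxp : x ∈ p₂) (hxS : x ∉ S)
    (h : Feasible p₂ π (R.erase x) S) : Feasible p₂ (0 :: π) R (insert x S) := by
  obtain ⟨hSR, hcard, hcount⟩ := h
  refine ⟨Finset.insert_subset hx (hSR.trans (Finset.erase_subset x R)), ?_, fun t => ?_⟩
  · rw [Finset.card_insert_of_notMem hxS]
    simpa using hcard
  cases t with
  | zero => simp
  | succ t =>
    rw [turnIndex_cons_zero_succ, Finset.filter_insert]
    split_ifs with hxt
    · refine (Finset.card_insert_le _ _).trans (Nat.succ_le_succ ?_)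
      refine (Finset.card_le_card (Finset.monotone_filter_right S fun o hoS ho => ?_)).trans
        (hcount t)
      have hox : o ≠ x := (Finset.mem_erase.1 (hSR hoS)).1
      rcases prefers_or_prefers hxp hox.symm with hxo | hox'
      · have := rankAmong_erase_add_one hx hxo
        omega
      · have := rankAmong_lt_of_prefers (Finset.mem_of_mem_erase (hSR hoS)) hox'
        have := rankAmong_erase_le (p := p₂) (R := R) x o
        omega
    · refine (Finset.card_le_card (Finset.monotone_filter_right S fun o _ ho => ?_)).trans
        (hcount (t + 1))
      have := rankAmong_erase_le (p := p₂) (R := R) x o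
      have := turnIndex_lt_succ π t
      omega

theorem Feasible.of_cons_zero {s : I} (hs : s ∈ S) (htop : ∀ y ∈ S, y ≠ s → Prefers p₂ s y)
    (h : Feasible p₂ (0 :: π) R S) : Feasible p₂ π (R.erase s) (S.erase s) := by
  obtain ⟨hSR, hcard, hcount⟩ := h
  refine ⟨Finset.erase_subset_erase s hSR, ?_, fun t => ?_⟩
  · rw [Finset.card_erase_of_mem hs]
    simp only [List.count_cons_self] at hcard
    omega
  have hrank : ∀ o ∈ S.erase s, rankAmong p₂ (R.erase s) o + 1 = rankAmong p₂ R o :=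
    fun o ho => rankAmong_erase_add_one (hSR hs) (htop o (Finset.mem_of_mem_erase ho)
      (Finset.ne_of_mem_erase ho))
  have hfilter : (S.erase s).filter (rankAmong p₂ (R.erase s) · < turnIndex π t) =
      (S.filter (rankAmong p₂ R · < turnIndex (0 :: π) (t + 1))).erase s := by
    rw [← Finset.filter_erase, turnIndex_cons_zero_succ]
    refine Finset.filter_congr fun o ho => ?_
    have := hrank o ho
    omega
  rw [hfilter]
  by_cases hst : rankAmong p₂ R s < turnIndex π t + 1
  · rw [Finset.card_erase_of_mem (Finset.mem_filter.2 ⟨hs, hst⟩)]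
    have := hcount (t + 1)
    omega
  · refine (Finset.card_eq_zero.2 (Finset.eq_empty_of_forall_notMem fun o ho => ?_)).trans_le
      (Nat.zero_le t)
    obtain ⟨hos, hoS, hot⟩ := by simpa using ho
    have := rankAmong_le_of_not_prefers (p := p₂) (R := R) (lt_asymm (htop o hoS hos))
    omega

theorem filter_rankAmong_erase_top {m : I} (hm : m ∈ R) (htop : ∀ y ∈ R, y ≠ m → Prefers p₂ m y)
    (hS : S ⊆ R.erase m) (n : ℕ) :
    S.filter (rankAmong p₂ (R.erase m) · < n) = S.filter (rankAmong p₂ R · < n + 1) := by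
  refine Finset.filter_congr fun o ho => ?_
  obtain ⟨hom, hoR⟩ := Finset.mem_erase.1 (hS ho)
  have := rankAmong_erase_add_one hm (htop o hoR hom)
  omega

theorem feasible_cons_one_iff {m : I} (hm : m ∈ R) (htop : ∀ y ∈ R, y ≠ m → Prefers p₂ m y) :
    Feasible p₂ (1 :: π) R S ↔ m ∉ S ∧ Feasible p₂ π (R.erase m) S := by
  constructor
  · rintro ⟨hSR, hcard, hcount⟩
    have hmS : m ∉ S := fun hmS => by
      have h0 := hcount 0
      have hm0 : m ∈ S.filter (rankAmong p₂ R · < turnIndex (1 :: π) 0) :=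
        Finset.mem_filter.2 ⟨hmS, by rw [rankAmong_eq_zero htop, turnIndex_cons_one]; omega⟩
      exact (Finset.card_pos.2 ⟨m, hm0⟩).ne' (Nat.le_zero.1 h0)
    have hSR' : S ⊆ R.erase m := fun o ho => Finset.mem_erase.2 ⟨fun h => hmS (h ▸ ho), hSR ho⟩
    refine ⟨hmS, hSR', by simpa using hcard, fun t => ?_⟩
    rw [filter_rankAmong_erase_top hm htop hSR']
    simpa using hcount t
  · rintro ⟨-, hSR', hcard, hcount⟩
    refine ⟨hSR'.trans (Finset.erase_subset m R), by simpa using hcard, fun t => ?_⟩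
    rw [turnIndex_cons_one, ← filter_rankAmong_erase_top hm htop hSR']
    exact hcount t

/-- The element added is the one of `T \ S` that agent `1` ranks lowest. -/
theorem Feasible.exists_insert {T : Finset I} (hS : Feasible p₂ π R S) (hT : Feasible p₂ π R T)
    (hST : S.card < T.card) : ∃ x ∈ T, x ∉ S ∧ Feasible p₂ π R (insert x S) := by
  obtain ⟨x, hxTS, hmax⟩ := Finset.exists_max_image (T \ S) (p₂.idxOf ·)
    (Finset.sdiff_nonempty.2 fun h => (Finset.card_le_card h).not_gt hST)
  obtain ⟨hxT, hxS⟩ := Finset.mem_sdiff.1 hxTS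
  refine ⟨x, hxT, hxS, Finset.insert_subset (hT.1 hxT) hS.1, ?_, fun t => ?_⟩
  · rw [Finset.card_insert_of_notMem hxS]
    exact hST.trans_le hT.2.1
  rw [Finset.filter_insert]
  split_ifs with hxt
  · refine (Finset.card_insert_le _ _).trans (Nat.succ_le_of_lt ?_)
    refine (card_filter_lt_card_filter hST fun y hy => ?_).trans_le (hT.2.2 t)
    exact lt_of_le_of_lt (rankAmong_le_of_not_prefers (not_lt.2 (hmax y hy))) hxt
  · exact hS.2.2 t

end Feasible

section SeqAlloc

theorem seqAlloc_subset {A : Type*} [DecidableEq A] (prefs : A → List I) :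
    ∀ (π : List A) (R : Finset I) (j : A), seqAlloc prefs π R j ⊆ R
  | [], _, _ => Finset.empty_subset _
  | a :: π, R, j => by
    rcases h : (prefs a).find? (· ∈ R) with _ | o
    · simpa only [seqAlloc, h] using seqAlloc_subset prefs π R j
    · have hoR : o ∈ R := by simpa using List.find?_some h
      have := seqAlloc_subset prefs π (R.erase o) j
      simp only [seqAlloc, h]
      split_ifs
      exacts [Finset.insert_subset hoR (this.trans (Finset.erase_subset o R)),
        this.trans (Finset.erase_subset o R)]

variable {q p₂ : List I} {π : List (Fin 2)} {R : Finset I} {o : I}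

theorem alloc2_subset (j : Fin 2) : alloc2 q p₂ π R j ⊆ R :=
  seqAlloc_subset _ π R j

theorem alloc2_cons_zero_of_find?_eq_none (h : q.find? (· ∈ R) = none) :
    alloc2 q p₂ (0 :: π) R 0 = alloc2 q p₂ π R 0 := by
  simp [alloc2, seqAlloc, h]

theorem alloc2_cons_zero_of_find?_eq_some (h : q.find? (· ∈ R) = some o) :
    alloc2 q p₂ (0 :: π) R 0 = insert o (alloc2 q p₂ π (R.erase o) 0) := by
  simp [alloc2, seqAlloc, h]

theorem alloc2_cons_one_of_find?_eq_some (h : p₂.find? (· ∈ R) = some o) :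
    alloc2 q p₂ (1 :: π) R 0 = alloc2 q p₂ π (R.erase o) 0 := by
  simp [alloc2, seqAlloc, h]

end SeqAlloc

section TwoAgents

variable {q p₂ : List I}

theorem card_alloc2 : ∀ {π : List (Fin 2)} {R : Finset I}, R ⊆ q.toFinset →
    R ⊆ p₂.toFinset → π.length ≤ R.card → (alloc2 q p₂ π R 0).card = π.count 0
  | [], _, _, _, _ => rfl
  | a :: π, R, hq, hp₂, hπ => by
    rw [List.length_cons] at hπ
    have hne : R.Nonempty := Finset.card_pos.1 (by omega)
    have hπ' (o : I) (ho : o ∈ R) : π.length ≤ (R.erase o).card := by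
      rw [Finset.card_erase_of_mem ho]
      omega
    have hq' (o : I) := (Finset.erase_subset o R).trans hq
    have hp₂' (o : I) := (Finset.erase_subset o R).trans hp₂
    match a with
    | 0 =>
      obtain ⟨o, ho⟩ := exists_find?_eq_some hq hne
      have hoR : o ∈ R := by simpa using List.find?_some ho
      rw [alloc2_cons_zero_of_find?_eq_some ho, Finset.card_insert_of_notMem
        fun h => Finset.notMem_erase o R (alloc2_subset 0 h),
        card_alloc2 (hq' o) (hp₂' o) (hπ' o hoR)]
      simp
    | 1 =>
      obtain ⟨o, ho⟩ := exists_find?_eq_some hp₂ hne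
      have hoR : o ∈ R := by simpa using List.find?_some ho
      rw [alloc2_cons_one_of_find?_eq_some ho, card_alloc2 (hq' o) (hp₂' o) (hπ' o hoR)]
      simp

theorem feasible_alloc2 : ∀ {π : List (Fin 2)} {R : Finset I}, R ⊆ p₂.toFinset →
    Feasible p₂ π R (alloc2 q p₂ π R 0)
  | [], _, _ => feasible_empty
  | 0 :: π, R, hp₂ => by
    have hp₂' (o : I) := (Finset.erase_subset o R).trans hp₂
    rcases h : q.find? (· ∈ R) with _ | o
    · rw [alloc2_cons_zero_of_find?_eq_none h]
      exact (feasible_alloc2 hp₂).cons_zero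
    · have hoR : o ∈ R := by simpa using List.find?_some h
      rw [alloc2_cons_zero_of_find?_eq_some h]
      exact (feasible_alloc2 (hp₂' o)).insert_cons_zero hoR (List.mem_toFinset.1 (hp₂ hoR))
        fun h => Finset.notMem_erase o R (alloc2_subset 0 h)
  | 1 :: π, R, hp₂ => by
    rcases R.eq_empty_or_nonempty with rfl | hne
    · rw [Finset.subset_empty.1 (alloc2_subset 0)]
      exact feasible_empty
    obtain ⟨m, hm⟩ := exists_find?_eq_some hp₂ hne
    have hmR : m ∈ R := by simpa using List.find?_some hm
    rw [alloc2_cons_one_of_find?_eq_some hm,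
      feasible_cons_one_iff hmR (prefers_of_find?_mem_eq_some hp₂ hm)]
    exact ⟨fun h => Finset.notMem_erase m R (alloc2_subset 0 h),
      feasible_alloc2 ((Finset.erase_subset m R).trans hp₂)⟩

def frontLoad (p₂ : List I) (S : Finset I) : List I :=
  p₂.filter (· ∈ S) ++ p₂.filter (· ∉ S)

theorem isReport_frontLoad {O : Finset I} (hp₂ : IsReport O p₂) (S : Finset I) :
    IsReport O (frontLoad p₂ S) := by
  have hperm : (frontLoad p₂ S).Perm p₂ := by
    simpa [frontLoad] using List.filter_append_perm (· ∈ S) p₂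
  exact ⟨hperm.nodup_iff.2 hp₂.1, fun o => hperm.mem_iff.trans (hp₂.2 o)⟩

theorem find?_frontLoad {S R : Finset I} {s : I} (h : p₂.find? (· ∈ S ∩ R) = some s) :
    (frontLoad p₂ S).find? (· ∈ R) = some s := by
  rw [frontLoad, List.find?_append, List.find?_filter]
  simp only [decide_eq_true_eq, ← Finset.mem_inter]
  rw [h, Option.some_or]

/-- Reporting `frontLoad p₂ S`, agent `0` always takes the remaining item of `S` that agent `1`
ranks highest. -/
theorem inter_subset_alloc2_frontLoad (S : Finset I) : ∀ {π : List (Fin 2)} {R : Finset I},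
    R ⊆ p₂.toFinset → Feasible p₂ π R (S ∩ R) → S ∩ R ⊆ alloc2 (frontLoad p₂ S) p₂ π R 0
  | [], _, _, h => by rw [h.eq_empty_of_nil]; exact Finset.empty_subset _
  | 0 :: π, R, hp₂, h => by
    rcases (S ∩ R).eq_empty_or_nonempty with hempty | hne
    · rw [hempty]; exact Finset.empty_subset _
    have hSRp₂ : S ∩ R ⊆ p₂.toFinset := Finset.inter_subset_right.trans hp₂
    obtain ⟨s, hs⟩ := exists_find?_eq_some hSRp₂ hne
    have hsSR : s ∈ S ∩ R := by simpa using List.find?_some hs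
    have hSR' : S ∩ R.erase s = (S ∩ R).erase s := Finset.inter_erase s S R
    have ih := inter_subset_alloc2_frontLoad S (π := π) (R := R.erase s)
      ((Finset.erase_subset s R).trans hp₂)
      (hSR' ▸ h.of_cons_zero hsSR (prefers_of_find?_mem_eq_some hSRp₂ hs))
    rw [alloc2_cons_zero_of_find?_eq_some (find?_frontLoad hs), ← Finset.insert_erase hsSR,
      ← hSR']
    exact Finset.insert_subset_insert s ih
  | 1 :: π, R, hp₂, h => by
    rcases R.eq_empty_or_nonempty with rfl | hne
    · simp
    obtain ⟨m, hm⟩ := exists_find?_eq_some hp₂ hne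
    have hmR : m ∈ R := by simpa using List.find?_some hm
    obtain ⟨hmS, h'⟩ := (feasible_cons_one_iff hmR (prefers_of_find?_mem_eq_some hp₂ hm)).1 h
    have hSR' : S ∩ R.erase m = S ∩ R := by
      rw [Finset.inter_erase, Finset.erase_eq_of_notMem hmS]
    rw [alloc2_cons_one_of_find?_eq_some hm, ← hSR']
    exact inter_subset_alloc2_frontLoad S ((Finset.erase_subset m R).trans hp₂)
      (hSR' ▸ h')

theorem achievable_iff_feasible {O : Finset I} {π : List (Fin 2)} (hp₂ : IsReport O p₂)
    (S : Finset I) : Achievable p₂ π O S ↔ Feasible p₂ π O S := by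
  have hOp₂ : O ⊆ p₂.toFinset := fun x hx => List.mem_toFinset.2 ((hp₂.2 x).2 hx)
  constructor
  · rintro ⟨q, -, hS⟩
    exact (feasible_alloc2 hOp₂).mono hS
  · intro h
    refine ⟨frontLoad p₂ S, isReport_frontLoad hp₂ S, ?_⟩
    have := inter_subset_alloc2_frontLoad S hOp₂ (by rwa [Finset.inter_eq_left.2 h.1])
    rwa [Finset.inter_eq_left.2 h.1] at this

end TwoAgents

section Manipulation

variable {O : Finset I} {π : List (Fin 2)} {p₂ q : List I} {S T : Finset I}

theorem Achievable.mono (hS : Achievable p₂ π O S) (hTS : T ⊆ S) : Achievable p₂ π O T :=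
  let ⟨q, hq, hSq⟩ := hS
  ⟨q, hq, hTS.trans hSq⟩

theorem Achievable.exists_insert (hp₂ : IsReport O p₂) (hS : Achievable p₂ π O S)
    (hT : Achievable p₂ π O T) (hST : S.card < T.card) :
    ∃ x ∈ T, x ∉ S ∧ Achievable p₂ π O (insert x S) := by
  simp only [achievable_iff_feasible hp₂] at hS hT ⊢
  exact hS.exists_insert hT hST

theorem Achievable.card_le (hπ : π.length ≤ O.card) (hp₂ : IsReport O p₂) (hq : IsReport O q)
    (hT : Achievable p₂ π O T) : T.card ≤ (alloc2 q p₂ π O 0).card := by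
  have hOp (p : List I) (hp : IsReport O p) : O ⊆ p.toFinset := fun x hx =>
    List.mem_toFinset.2 ((hp.2 x).2 hx)
  obtain ⟨q', hq', hTq'⟩ := hT
  rw [card_alloc2 (hOp q hq) (hOp p₂ hp₂) hπ, ← card_alloc2 (hOp q' hq') (hOp p₂ hp₂) hπ]
  exact Finset.card_le_card hTq'

theorem Achievable.sum_le {u : I → ℝ} (hu : ∀ o ∈ O, 0 < u o)
    (hbest : ∀ q' : List I, IsReport O q' →
      ∑ o ∈ alloc2 q' p₂ π O 0, u o ≤ ∑ o ∈ alloc2 q p₂ π O 0, u o)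
    (hS : Achievable p₂ π O S) : ∑ o ∈ S, u o ≤ ∑ o ∈ alloc2 q p₂ π O 0, u o := by
  obtain ⟨q', hq', hSq'⟩ := hS
  refine (Finset.sum_le_sum_of_subset_of_nonneg hSq' fun o ho _ => ?_).trans (hbest q' hq')
  exact (hu o (alloc2_subset 0 ho)).le

end Manipulation

end

/-- Let `S*` be the greedy set.  For every additive utility `u`
consistent with agent 1's true preference ≻₁ (the ranking list `p1`) and every
best response `q` of agent 1 with respect to `u`, agent 1's allocation under
`(q, p2)` equals `S*`.  In particular, for two agents all best responses yield
the same allocation for the manipulator, independent of the chosen consistent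
utility. -/
theorem statement6 {I : Type*} [DecidableEq I]
    (O : Finset I) (π : List (Fin 2)) (hπ : π.length = O.card)
    (p2 : List I) (hp2 : IsReport O p2)
    (p1 : List I) (hp1 : IsReport O p1)  -- agent 1's true preference ≻₁
    :
    ∀ u : I → ℝ, Consistent O p1 u →
      ∀ q : List I, IsReport O q →
        (∀ q' : List I, IsReport O q' →
          ∑ o ∈ alloc2 q' p2 π O 0, u o ≤ ∑ o ∈ alloc2 q p2 π O 0, u o) →
        alloc2 q p2 π O 0 = greedy (Achievable p2 π O) p1 ∅ := by
  intro u hu q hq hbest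
  set A := alloc2 q p2 π O 0
  have hp1O : p1.toFinset = O := Finset.ext fun o => List.mem_toFinset.trans (hp1.2 o)
  have hA : Achievable p2 π O A := ⟨q, hq, subset_rfl⟩
  by_contra hne
  obtain ⟨x, hxG, hxA, hxC⟩ := exists_mem_greedy_notMem (fun _ _ h hS => hS.mono h)
    ⟨p1, hp1, Finset.empty_subset _⟩ hp1.1 hA (hp1O ▸ alloc2_subset 0) hne
  obtain ⟨y, hyA, hyC, hB⟩ := exists_insert_erase (fun _ _ hS hT => hS.exists_insert hp2 hT) hA
    (fun T hT => hT.card_le hπ.le hp2 hq) hxA (Finset.filter_subset _ A) hxC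
  have hxO : x ∈ O := by simpa [hp1O] using greedy_subset _ p1 ∅ hxG
  have hxy : Prefers p1 x y :=
    (prefers_or_prefers ((hp1.2 x).2 hxO) (ne_of_mem_of_not_mem hyA hxA).symm).resolve_right
      fun h => hyC (Finset.mem_filter.2 ⟨hyA, h⟩)
  have huxy : u y < u x := (hu.2 x hxO y (alloc2_subset 0 hyA)).2 hxy
  have hsum := hB.sum_le hu.1 hbest
  rw [Finset.sum_insert fun h => hxA (Finset.mem_of_mem_erase h)] at hsum
  have := Finset.add_sum_erase A u hyA
  linarith
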